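/- arXiv:2402.13170 — 3 statements merged into one kernel-verified Lean document; each statement's English description precedes it below -/
import Mathlib

section
/- For every nonempty finite set A of integers, there exists an integer k with 0 ≤ k and 2k ≤ |A| such that (|A|+1) · |w(C(A,k))| ≥ |w(2^A)|; i.e., some cardinality k ≤ |A|/2 is such that the k-element subsets of A realize at least a 1/(|A|+1) fraction of all distinct subset sums of A. -/
/-!
The sums of the subsets of `A` are the union, over `0 ≤ k ≤ |A|`, of the sums of its
`k`-subsets, so the most productive cardinality `k` realises at least a `1/(|A|+1)` fraction
of them. Passing to complements, `x ↦ w(A) - x` is a bijection between the `k`-subset sums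
and the `(|A| - k)`-subset sums, so `k` may be replaced by `|A| - k` to get `2k ≤ |A|`.
-/

open Finset

section SubsetSums

variable {α : Type*} [DecidableEq α]

lemma card_image_sum_powersetCard_le_compl [AddCommGroup α] (s : Finset α) (k : ℕ) :
    #((s.powersetCard k).image (fun B => B.sum id)) ≤
      #((s.powersetCard (#s - k)).image (fun B => B.sum id)) := by
  refine card_le_card_of_injOn (s.sum id - ·) ?_ (sub_right_injective.injOn)
  intro x hx
  simp only [coe_image, Set.mem_image, mem_coe, mem_powersetCard] at hx ⊢
  obtain ⟨B, ⟨hBs, hBk⟩, rfl⟩ := hx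
  exact ⟨s \ B, ⟨sdiff_subset, by rw [card_sdiff_of_subset hBs, hBk]⟩, sum_sdiff_eq_sub hBs⟩

lemma card_image_sum_powersetCard_compl [AddCommGroup α] (s : Finset α) {k : ℕ}
    (hk : k ≤ #s) :
    #((s.powersetCard (#s - k)).image (fun B => B.sum id)) =
      #((s.powersetCard k).image (fun B => B.sum id)) := by
  refine le_antisymm ?_ (card_image_sum_powersetCard_le_compl s k)
  simpa [Nat.sub_sub_self hk] using card_image_sum_powersetCard_le_compl s (#s - k)

lemma exists_card_image_sum_powerset_le [AddCommMonoid α] (s : Finset α) :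
    ∃ k ≤ #s, #(s.powerset.image (fun B => B.sum id)) ≤
      (#s + 1) * #((s.powersetCard k).image (fun B => B.sum id)) := by
  let sums : ℕ → Finset α := fun k => (s.powersetCard k).image (fun B => B.sum id)
  obtain ⟨k, hk, hmax⟩ := exists_max_image (range (#s + 1)) (fun k => #(sums k))
    nonempty_range_add_one
  refine ⟨k, Nat.lt_succ_iff.mp (mem_range.mp hk), ?_⟩
  calc #(s.powerset.image (fun B => B.sum id))
      = #((range (#s + 1)).biUnion sums) := by rw [powerset_card_biUnion, biUnion_image]
    _ ≤ #(range (#s + 1)) * #(sums k) := card_biUnion_le_card_mul _ _ _ hmax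
    _ = (#s + 1) * #(sums k) := by rw [card_range]

end SubsetSums

theorem exists_good_cardinality_general (A : Finset ℤ) :
    ∃ k : ℕ, 2 * k ≤ A.card ∧
      (A.powerset.image (fun B => B.sum id)).card ≤
        (A.card + 1) * ((A.powersetCard k).image (fun B => B.sum id)).card := by
  obtain ⟨k, hk, hsums⟩ := exists_card_image_sum_powerset_le A
  by_cases hhalf : 2 * k ≤ #A
  · exact ⟨k, hhalf, hsums⟩
  · refine ⟨#A - k, by omega, ?_⟩
    rwa [card_image_sum_powersetCard_compl A hk]

theorem exists_good_cardinality (A : Finset ℤ) (hA : A.Nonempty) :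
    ∃ k : ℕ, 2 * k ≤ A.card ∧
      (A.powerset.image (fun B => B.sum id)).card ≤
        (A.card + 1) * ((A.powersetCard k).image (fun B => B.sum id)).card :=
  exists_good_cardinality_general A
end

section
/- Define β : [0,1] → ℝ by β(α) = 0.13 if 0.45 ≤ α ≤ 0.55 and β(α) = 0 otherwise. For α ∈ [0,1] set γ(α) = (α − 3β(α)/2)/(1 − 3β(α)), λ(α) = h(3β(α)) − α·h(3β(α)/(2α)) − (1−α)·h(3β(α)/(2(1−α))) (where a term with coefficient α = 0 or 1−α = 0 is taken to be 0), and T(α) = (1/2)·( h(γ(α)) − 3β(α)·h(γ(α)) + 3β(α) + 2λ(α) ). Then T(α) ≤ 1/2 for every α ∈ [0,1], and T(1/2) = 1/2. -/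
open scoped Classical

/-- Binary entropy function (base-2 logarithm). Note `Real.logb 2 0 = 0`,
so `binH 0 = binH 1 = 0` automatically. -/
noncomputable def binH (x : ℝ) : ℝ := -x * Real.logb 2 x - (1 - x) * Real.logb 2 (1 - x)

/-- The parameter β(α) from the algorithm. -/
noncomputable def betaFn (α : ℝ) : ℝ := if 0.45 ≤ α ∧ α ≤ 0.55 then 0.13 else 0

/-- γ(α) = (α − 3β(α)/2)/(1 − 3β(α)). -/
noncomputable def gammaFn (α : ℝ) : ℝ := (α - 3 * betaFn α / 2) / (1 - 3 * betaFn α)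

/-- λ(α) = h(3β) − α·h(3β/(2α)) − (1−α)·h(3β/(2(1−α))).
(For α = 0 or α = 1 the degenerate term vanishes since its coefficient is 0.) -/
noncomputable def lamFn (α : ℝ) : ℝ :=
  binH (3 * betaFn α) - α * binH (3 * betaFn α / (2 * α))
    - (1 - α) * binH (3 * betaFn α / (2 * (1 - α)))

/-- The time-complexity exponent T(α). -/
noncomputable def TFn (α : ℝ) : ℝ :=
  (1 / 2) * (binH (gammaFn α) - 3 * betaFn α * binH (gammaFn α) + 3 * betaFn α + 2 * lamFn α)

/-!
Write `b = 3β(α)` and `H` for the binary entropy in nats. Splitting `α·H(b/(2α))` and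
`(1-α)·H(b/(2(1-α)))` into `negMulLog` terms gives `λ = h(α) - (1-b)·h(γ) - b`, hence
`T(α) = 1/2 - (E_b(1/2) - E_b(α)) / (2 ln 2)` with `E_b(α) = 2H(α) - (1-b)·H(γ(α))`.
For `b = 0` this is `H(α) ≤ ln 2`. For `b = 0.39`, `E_b` is symmetric about `1/2` and
`E_b'(α) = log ((1-α)²(α-b/2) / (α²(1-α-b/2)))`, where, with `s = 1/2 - α`, the numerator minus
the denominator is `s·(1/2 - b - 2s²)`, positive on `(0.45, 1/2)`.
-/

open Real

lemma binH_eq_binEntropy_div_log_two (x : ℝ) : binH x = binEntropy x / log 2 := by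
  simp only [binH, binEntropy, logb, log_inv]
  ring

lemma mul_binEntropy_div (a d : ℝ) :
    d * binEntropy (a / d) = negMulLog a + negMulLog (d - a) - negMulLog d := by
  rcases eq_or_ne d 0 with rfl | hd
  · simp [negMulLog] -- `log` is even
  have hsub : 1 - a / d = (d - a) * d⁻¹ := by field_simp
  rw [binEntropy_eq_negMulLog_add_negMulLog_one_sub, hsub, div_eq_mul_inv, negMulLog_mul,
    negMulLog_mul]
  simp only [negMulLog, log_inv]
  field_simp
  ring

lemma binEntropy_sub_split (b α : ℝ) :
    binEntropy b - α * binEntropy (b / (2 * α)) - (1 - α) * binEntropy (b / (2 * (1 - α)))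
      = binEntropy α - (1 - b) * binEntropy ((α - b / 2) / (1 - b)) - b * log 2 := by
  have hb : negMulLog b = 2 * negMulLog (b / 2) - b * log 2 := by
    have h := negMulLog_mul 2 (b / 2)
    rw [show 2 * (b / 2) = b by ring] at h
    rw [h, negMulLog]
    ring
  have hc : 1 - b - (α - b / 2) = 1 - α - b / 2 := by ring
  rw [div_mul_eq_div_div, div_mul_eq_div_div, mul_binEntropy_div, mul_binEntropy_div,
    mul_binEntropy_div, hc, binEntropy_eq_negMulLog_add_negMulLog_one_sub b,
    binEntropy_eq_negMulLog_add_negMulLog_one_sub α, hb]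
  ring

noncomputable def entropyBalance (b α : ℝ) : ℝ :=
  2 * binEntropy α - (1 - b) * binEntropy ((α - b / 2) / (1 - b))

lemma entropyBalance_one_sub {b : ℝ} (hb : b ≠ 1) (α : ℝ) :
    entropyBalance b (1 - α) = entropyBalance b α := by
  have hγ : (1 - α - b / 2) / (1 - b) = 1 - (α - b / 2) / (1 - b) := by
    field_simp [sub_ne_zero.mpr hb.symm]
    ring
  rw [entropyBalance, entropyBalance, hγ, binEntropy_one_sub, binEntropy_one_sub]

lemma entropyBalance_two_inv {b : ℝ} (hb : b ≠ 1) : entropyBalance b 2⁻¹ = (1 + b) * log 2 := by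
  have hγ : (2⁻¹ - b / 2) / (1 - b) = 2⁻¹ := by
    field_simp [sub_ne_zero.mpr hb.symm]
  rw [entropyBalance, hγ, binEntropy_two_inv]
  ring

lemma TFn_eq_half_sub (α : ℝ) :
    TFn α = 1 / 2 - (entropyBalance (3 * betaFn α) 2⁻¹ - entropyBalance (3 * betaFn α) α)
      / (2 * log 2) := by
  have hβ : 3 * betaFn α ≠ 1 := by unfold betaFn; split_ifs <;> norm_num
  have hlog : log 2 ≠ 0 := (log_pos one_lt_two).ne'
  have hsplit := binEntropy_sub_split (3 * betaFn α) α
  rw [entropyBalance_two_inv hβ]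
  simp only [TFn, lamFn, gammaFn, entropyBalance, binH_eq_binEntropy_div_log_two]
  set b := 3 * betaFn α
  set γ := (α - b / 2) / (1 - b)
  set p := b / (2 * α)
  set q := b / (2 * (1 - α))
  clear_value b γ p q
  field_simp
  linear_combination 2 * hsplit

lemma hasDerivAt_entropyBalance {b α : ℝ} (hb : 0 ≤ b) (hαb : b / 2 < α) (hαb' : α < 1 - b / 2) :
    HasDerivAt (entropyBalance b)
      (2 * (log (1 - α) - log α) - (log (1 - α - b / 2) - log (α - b / 2))) α := by
  have hb1 : 0 < 1 - b := by linarith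
  have hγ0 : 0 < (α - b / 2) / (1 - b) := div_pos (by linarith) hb1
  have hγ1 : 1 - (α - b / 2) / (1 - b) = (1 - α - b / 2) / (1 - b) := by
    field_simp
    ring
  have hγ1' : 0 < 1 - (α - b / 2) / (1 - b) := by rw [hγ1]; exact div_pos (by linarith) hb1
  have hγ := (hasDerivAt_binEntropy hγ0.ne' (sub_pos.mp hγ1').ne).comp α
    (((hasDerivAt_id α).sub_const (b / 2)).div_const (1 - b))
  refine (((hasDerivAt_binEntropy (p := α) (by linarith) (by linarith)).const_mul 2).sub
    (hγ.const_mul (1 - b))).congr_deriv ?_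
  rw [hγ1, log_div (by linarith) hb1.ne', log_div (by linarith) hb1.ne', mul_one_div,
    mul_div_cancel₀ _ hb1.ne']
  ring

lemma entropyBalance_strictMonoOn {b r : ℝ} (hb : 0 ≤ b) (hr : 4 * r ^ 2 < 1 - 2 * b) :
    StrictMonoOn (entropyBalance b) (Set.Icc (2⁻¹ - r) 2⁻¹) := by
  refine strictMonoOn_of_deriv_pos (convex_Icc _ _) (by unfold entropyBalance; fun_prop) ?_
  intro α hα
  rw [interior_Icc] at hα
  obtain ⟨hα₀, hα₁⟩ := hα
  have hs : 4 * (2⁻¹ - α) ^ 2 < 1 - 2 * b := by nlinarith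
  have hαb : b / 2 < α := by nlinarith
  have hαb' : α < 1 - b / 2 := by linarith
  rw [(hasDerivAt_entropyBalance hb hαb hαb').deriv]
  have hα : 0 < α := by linarith
  have hα' : 0 < 1 - α := by linarith
  have hA : 0 < α - b / 2 := by linarith
  have hB : 0 < 1 - α - b / 2 := by linarith
  have key : log (α ^ 2 * (1 - α - b / 2)) < log ((1 - α) ^ 2 * (α - b / 2)) := by
    apply log_lt_log (by positivity)
    nlinarith [mul_pos (sub_pos.mpr hα₁) (sub_pos.mpr hs)]
  rw [log_mul (by positivity) hB.ne', log_mul (by positivity) hA.ne', log_pow,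
    log_pow] at key
  push_cast at key
  linarith

lemma entropyBalance_le_two_inv {b r α : ℝ} (hb : 0 ≤ b) (hr : 4 * r ^ 2 < 1 - 2 * b)
    (hα : |α - 2⁻¹| ≤ r) : entropyBalance b α ≤ entropyBalance b 2⁻¹ := by
  have hmono := (entropyBalance_strictMonoOn hb hr).monotoneOn
  have hr0 : 0 ≤ r := (abs_nonneg _).trans hα
  have hhalf : 2⁻¹ ∈ Set.Icc (2⁻¹ - r) 2⁻¹ := ⟨by linarith, le_rfl⟩
  obtain ⟨hα₀, hα₁⟩ := abs_le.mp hα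
  rcases le_total α 2⁻¹ with hle | hge
  · exact hmono ⟨by linarith, hle⟩ hhalf hle
  · rw [← entropyBalance_one_sub (by nlinarith)]
    exact hmono ⟨by linarith, by linarith⟩ hhalf (by linarith)

theorem time_exponent_bound :
    (∀ α : ℝ, 0 ≤ α → α ≤ 1 → TFn α ≤ 1 / 2) ∧ TFn (1 / 2) = 1 / 2 := by
  refine ⟨fun α _ _ => ?_, by simp [TFn_eq_half_sub]⟩
  rw [TFn_eq_half_sub, sub_le_self_iff]
  refine div_nonneg (sub_nonneg.mpr ?_) (by positivity)
  unfold betaFn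
  split_ifs with hmid
  · refine entropyBalance_le_two_inv (r := 1 / 20) (by norm_num) (by norm_num) ?_
    rw [abs_le]
    norm_num at hmid ⊢
    constructor <;> linarith
  · simp only [entropyBalance, mul_zero, zero_div, sub_zero, div_one, one_mul, binEntropy_two_inv]
    linarith [binEntropy_le_log_two (p := α)]
end

section
/- For every real μ with 0 ≤ μ ≤ 1/2, setting x = 1/2 + log₂(3)·(μ − 1/4), the following inequality holds: (1/2 + μ)·h( 2x/(1 + 2μ) ) − (1/2)·h(2x − 2μ) ≤ 1 − h(1/4). -/
open Real Set

theorem hasDerivAt_affine (α β c t : ℝ) : HasDerivAt (fun s => α + β * (s - c)) β t := by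
  simpa using (((hasDerivAt_id t).sub_const c).const_mul β).const_add α

theorem ConcaveOn.isMaxOn_of_hasDerivAt_eq_zero {S : Set ℝ} {f : ℝ → ℝ} {c : ℝ}
    (hf : ConcaveOn ℝ S f) (hc : c ∈ S) (hd : HasDerivAt f 0 c) : IsMaxOn f S c := by
  refine fun y hy => show f y ≤ f c from ?_
  rcases lt_trichotomy c y with hcy | rfl | hyc
  · exact (slope_nonpos_iff_of_le hcy.le).1 (hf.slope_le_of_hasDerivAt hc hy hcy hd)
  · exact le_rfl
  · exact (slope_nonneg_iff_of_le hyc.le).1 (hf.le_slope_of_hasDerivAt hy hc hyc hd)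

theorem negMulLog_half : negMulLog (1 / 2) = log 2 / 2 := by
  rw [negMulLog, one_div, log_inv]
  ring

theorem mul_negMulLog_div (x : ℝ) {a : ℝ} (ha : a ≠ 0) :
    a * negMulLog (x / a) = negMulLog x + x * log a := by
  rw [div_eq_mul_inv, negMulLog_mul, negMulLog_def]
  simp only [log_inv]
  field_simp

theorem one_lt_logb_two_three : 1 < logb 2 3 := by
  rw [lt_logb_iff_rpow_lt one_lt_two (by norm_num)]; norm_num

theorem logb_two_three_lt_two : logb 2 3 < 2 := by
  rw [logb_lt_iff_lt_rpow one_lt_two (by norm_num)]; norm_num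

theorem binH_eq_negMulLog (y : ℝ) : binH y = (negMulLog y + negMulLog (1 - y)) / log 2 := by
  simp only [binH, logb, negMulLog]; ring

theorem mul_binH_div (x : ℝ) {a : ℝ} (ha : a ≠ 0) :
    a * binH (x / a) = (negMulLog x + negMulLog (a - x) - negMulLog a) / log 2 := by
  rw [binH_eq_negMulLog, one_sub_div ha, mul_div_assoc', mul_add, mul_negMulLog_div x ha,
    mul_negMulLog_div (a - x) ha, negMulLog_def]
  ring

noncomputable def f2Core (L μ : ℝ) : ℝ :=
  negMulLog (1 / 2 + L * (μ - 1 / 4)) - negMulLog (1 / 4 + (L - 1) * (μ - 1 / 4))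
    - negMulLog (1 / 2 + μ)

noncomputable def f2CoreDeriv (L μ : ℝ) : ℝ :=
  -L * log (1 / 2 + L * (μ - 1 / 4)) + (L - 1) * log (1 / 4 + (L - 1) * (μ - 1 / 4))
    + log (1 / 2 + μ)

noncomputable def f2CoreDeriv2 (L μ : ℝ) : ℝ :=
  -L ^ 2 / (1 / 2 + L * (μ - 1 / 4)) + (L - 1) ^ 2 / (1 / 4 + (L - 1) * (μ - 1 / 4))
    + 1 / (1 / 2 + μ)

section f2Core

variable {L μ : ℝ}

theorem hasDerivAt_f2Core (hx : 1 / 2 + L * (μ - 1 / 4) ≠ 0)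
    (hp : 1 / 4 + (L - 1) * (μ - 1 / 4) ≠ 0) (ha : 1 / 2 + μ ≠ 0) :
    HasDerivAt (f2Core L) (f2CoreDeriv L μ) μ := by
  have dx := (hasDerivAt_negMulLog hx).comp μ (hasDerivAt_affine (1 / 2) L (1 / 4) μ)
  have dp := (hasDerivAt_negMulLog hp).comp μ (hasDerivAt_affine (1 / 4) (L - 1) (1 / 4) μ)
  have da := (hasDerivAt_negMulLog ha).comp μ ((hasDerivAt_id' μ).const_add (1 / 2))
  exact ((dx.sub dp).sub da).congr_deriv (by rw [f2CoreDeriv]; ring)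

theorem hasDerivAt_f2CoreDeriv (hx : 1 / 2 + L * (μ - 1 / 4) ≠ 0)
    (hp : 1 / 4 + (L - 1) * (μ - 1 / 4) ≠ 0) (ha : 1 / 2 + μ ≠ 0) :
    HasDerivAt (f2CoreDeriv L) (f2CoreDeriv2 L μ) μ := by
  have dx := ((hasDerivAt_affine (1 / 2) L (1 / 4) μ).log hx).const_mul (-L)
  have dp := ((hasDerivAt_affine (1 / 4) (L - 1) (1 / 4) μ).log hp).const_mul (L - 1)
  have da := ((hasDerivAt_id' μ).const_add (1 / 2)).log ha
  exact ((dx.add dp).add da).congr_deriv (by rw [f2CoreDeriv2]; ring)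

theorem f2CoreDeriv_quarter (L : ℝ) : f2CoreDeriv L (1 / 4) = log 3 - L * log 2 := by
  have hlog4 : log 4 = 2 * log 2 := by
    rw [show (4 : ℝ) = 2 ^ 2 by norm_num, log_pow]; norm_num
  norm_num [f2CoreDeriv, log_div, hlog4]
  ring

theorem hasDerivAt_f2Core_logb_two_three_quarter :
    HasDerivAt (f2Core (logb 2 3)) 0 (1 / 4) := by
  have h := hasDerivAt_f2Core (L := logb 2 3) (μ := 1 / 4) (by norm_num) (by norm_num)
    (by norm_num)
  rwa [f2CoreDeriv_quarter, logb, div_mul_cancel₀ _ (log_pos one_lt_two).ne', sub_self] at h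

variable (hL1 : 1 ≤ L) (hL2 : L < 2)
include hL1 hL2

theorem f2Core_args_pos (hμ : 0 ≤ μ) :
    0 < 1 / 2 + L * (μ - 1 / 4) ∧ 0 < 1 / 4 + (L - 1) * (μ - 1 / 4) ∧ 0 < 1 / 2 + μ := by
  refine ⟨?_, ?_, ?_⟩ <;> nlinarith

theorem f2CoreDeriv2_nonpos (hμ : 0 ≤ μ) : f2CoreDeriv2 L μ ≤ 0 := by
  obtain ⟨hx, hp, ha⟩ := f2Core_args_pos hL1 hL2 hμ
  rw [f2CoreDeriv2, neg_div, neg_add_eq_sub, sub_add_eq_add_sub, sub_nonpos,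
    div_add_div _ _ hp.ne' ha.ne', div_le_div_iff₀ (by positivity) hx]
  have hL0 : (0 : ℝ) ≤ L := by linarith
  have hL1' : (0 : ℝ) ≤ L - 1 := by linarith
  nlinarith [mul_nonneg (mul_nonneg hL0 hL1') hμ,
    mul_pos (by linarith : (0 : ℝ) < 2 - L) (by linarith : (0 : ℝ) < 5 * L - 4)]

theorem concaveOn_f2Core : ConcaveOn ℝ (Ici 0) (f2Core L) := by
  refine concaveOn_of_hasDerivWithinAt2_nonpos (convex_Ici 0)
    (f' := f2CoreDeriv L) (f'' := f2CoreDeriv2 L)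
    (by unfold f2Core; fun_prop) (fun μ hμ => ?_) (fun μ hμ => ?_) (fun μ hμ => ?_)
  all_goals
    rw [interior_Ici] at hμ
    obtain ⟨hx, hp, ha⟩ := f2Core_args_pos hL1 hL2 hμ.le
  · exact (hasDerivAt_f2Core hx.ne' hp.ne' ha.ne').hasDerivWithinAt
  · exact (hasDerivAt_f2CoreDeriv hx.ne' hp.ne' ha.ne').hasDerivWithinAt
  · exact f2CoreDeriv2_nonpos hL1 hL2 hμ.le

end f2Core

theorem entropy_difference_eq_f2Core (L : ℝ) {μ : ℝ} (hμ : 1 / 2 + μ ≠ 0) :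
    (1 / 2 + μ) * binH (2 * (1 / 2 + L * (μ - 1 / 4)) / (1 + 2 * μ))
      - (1 / 2) * binH (2 * (1 / 2 + L * (μ - 1 / 4)) - 2 * μ)
      = (f2Core L μ + negMulLog (1 / 2)) / log 2 := by
  have hdouble : 2 * (1 / 2 + L * (μ - 1 / 4)) - 2 * μ
      = (1 / 4 + (L - 1) * (μ - 1 / 4)) / (1 / 2) := by ring
  rw [show 1 + 2 * μ = 2 * (1 / 2 + μ) by ring, mul_div_mul_left _ _ two_ne_zero, hdouble,
    mul_binH_div _ hμ, mul_binH_div _ one_half_pos.ne',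
    show 1 / 2 + μ - (1 / 2 + L * (μ - 1 / 4)) = 1 / 2 - (1 / 4 + (L - 1) * (μ - 1 / 4)) by ring,
    f2Core]
  ring

theorem one_sub_binH_quarter_eq_f2Core (L : ℝ) :
    1 - binH (1 / 4) = (f2Core L (1 / 4) + negMulLog (1 / 2)) / log 2 := by
  have hlog2 := log_pos one_lt_two
  norm_num [binH_eq_negMulLog, f2Core, negMulLog_half]
  field_simp
  ring

theorem f2_bound_general (μ : ℝ) (hμ0 : 0 ≤ μ) :
    (1 / 2 + μ) * binH (2 * (1 / 2 + Real.logb 2 3 * (μ - 1 / 4)) / (1 + 2 * μ))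
      - (1 / 2) * binH (2 * (1 / 2 + Real.logb 2 3 * (μ - 1 / 4)) - 2 * μ)
      ≤ 1 - binH (1 / 4) := by
  have hconc := concaveOn_f2Core one_lt_logb_two_three.le logb_two_three_lt_two
  have hmax := hconc.isMaxOn_of_hasDerivAt_eq_zero (by norm_num)
    hasDerivAt_f2Core_logb_two_three_quarter
  rw [entropy_difference_eq_f2Core _ (by positivity), one_sub_binH_quarter_eq_f2Core (logb 2 3)]
  gcongr
  exact hmax hμ0

theorem f2_bound (μ : ℝ) (hμ0 : 0 ≤ μ) (hμ1 : μ ≤ 1 / 2) :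
    (1 / 2 + μ) * binH (2 * (1 / 2 + Real.logb 2 3 * (μ - 1 / 4)) / (1 + 2 * μ))
      - (1 / 2) * binH (2 * (1 / 2 + Real.logb 2 3 * (μ - 1 / 4)) - 2 * μ)
      ≤ 1 - binH (1 / 4) :=
  f2_bound_general μ hμ0
end
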